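/- Let S be a shape in the triangular grid with at least two points and let v ∈ S be SCE w.r.t. S. Then at most one neighbor of v in S is an interior point of S; moreover, if some neighbor of v in S is an interior point of S, then v has exactly three neighbors outside S (i.e., its boundary count w.r.t. S equals 1). -/

import Mathlib

/-- The triangular grid: the simple graph on ℤ × ℤ where two vertices are adjacent
iff their difference lies in {(1,0),(−1,0),(0,1),(0,−1),(1,−1),(−1,1)}. -/
def triGrid : SimpleGraph (ℤ × ℤ) where
  Adj u v := (u.1 - v.1, u.2 - v.2) ∈
    ({(1,0), (-1,0), (0,1), (0,-1), (1,-1), (-1,1)} : Set (ℤ × ℤ))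
  symm := by
    constructor
    intro u v h
    simp only [Set.mem_insert_iff, Set.mem_singleton_iff, Prod.mk.injEq] at h ⊢
    omega
  loopless := by
    constructor
    intro u h
    simp only [Set.mem_insert_iff, Set.mem_singleton_iff, Prod.mk.injEq] at h
    omega

/-- The subgraph of the triangular grid induced by `S`, viewed as a graph on all of
ℤ × ℤ (vertices outside `S` are isolated): an edge requires both endpoints in `S`. -/
def gOn (S : Set (ℤ × ℤ)) : SimpleGraph (ℤ × ℤ) where
  Adj u v := triGrid.Adj u v ∧ u ∈ S ∧ v ∈ S
  symm := ⟨fun u v h => ⟨h.1.symm, h.2.2, h.2.1⟩⟩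
  loopless := ⟨fun u h => triGrid.loopless.irrefl u h.1⟩

/-- A shape: a finite nonempty set of grid points. -/
def IsShape (S : Set (ℤ × ℤ)) : Prop := S.Finite ∧ S.Nonempty

/-- The subgraph of the grid induced by `S` is connected. -/
def ShapeConnected (S : Set (ℤ × ℤ)) : Prop :=
  ∀ u ∈ S, ∀ v ∈ S, (gOn S).Reachable u v

/-- A connected shape. -/
def ConnectedShape (S : Set (ℤ × ℤ)) : Prop := IsShape S ∧ ShapeConnected S

/-- The connected component of `x` in the subgraph induced by the complement of `S`. -/
def compOf (S : Set (ℤ × ℤ)) (x : ℤ × ℤ) : Set (ℤ × ℤ) :=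
  {y | (gOn Sᶜ).Reachable x y}

/-- A hole point of `S`: a point lying in a finite connected component of the
complement of `S`. -/
def IsHolePoint (S : Set (ℤ × ℤ)) (x : ℤ × ℤ) : Prop :=
  x ∉ S ∧ (compOf S x).Finite

/-- A simply-connected shape: connected and with no holes. -/
def SimplyConnectedShape (S : Set (ℤ × ℤ)) : Prop :=
  ConnectedShape S ∧ ∀ x, ¬ IsHolePoint S x

/-- Graph distance within the subgraph induced by `S`. -/
noncomputable def distS (S : Set (ℤ × ℤ)) (u v : ℤ × ℤ) : ℕ := (gOn S).dist u v

/-- Diameter of the shape `S` w.r.t. `distS`. -/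
noncomputable def shapeDiam (S : Set (ℤ × ℤ)) : ℕ :=
  sSup {d : ℕ | ∃ u ∈ S, ∃ v ∈ S, distS S u v = d}

/-- A boundary point of `S`: a point of `S` with a neighbor outside `S`. -/
def IsBoundaryPt (S : Set (ℤ × ℤ)) (v : ℤ × ℤ) : Prop :=
  v ∈ S ∧ ∃ w, triGrid.Adj v w ∧ w ∉ S

/-- An outer boundary point of `S`: a point of `S` with a neighbor lying in an
infinite connected component of the complement of `S`. -/
def IsOuterBoundaryPt (S : Set (ℤ × ℤ)) (v : ℤ × ℤ) : Prop :=
  v ∈ S ∧ ∃ w, triGrid.Adj v w ∧ w ∉ S ∧ (compOf S w).Infinite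

/-- An interior point of `S`: a point of `S` all of whose neighbors lie in `S`. -/
def IsInteriorPt (S : Set (ℤ × ℤ)) (v : ℤ × ℤ) : Prop :=
  v ∈ S ∧ ∀ w, triGrid.Adj v w → w ∈ S

/-- The six neighbor directions of a grid point, in cyclic order. -/
def dirs : Fin 6 → ℤ × ℤ := ![(1,0), (0,1), (-1,1), (-1,0), (0,-1), (1,-1)]

/-- The `i`-th neighbor of `v`, in the cyclic order of the 6-cycle of neighbors. -/
def nbr (v : ℤ × ℤ) (i : Fin 6) : ℤ × ℤ := (v.1 + (dirs i).1, v.2 + (dirs i).2)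

/-- The neighbors of `v` lying in `S`. -/
def nbrsIn (S : Set (ℤ × ℤ)) (v : ℤ × ℤ) : Set (ℤ × ℤ) :=
  {w | triGrid.Adj v w ∧ w ∈ S}

/-- `v` is redundant w.r.t. `S`: the neighbors of `v` in `S` induce a connected
subgraph of the grid. -/
def Redundant (S : Set (ℤ × ℤ)) (v : ℤ × ℤ) : Prop :=
  ∀ u ∈ nbrsIn S v, ∀ w ∈ nbrsIn S v, (gOn (nbrsIn S v)).Reachable u w

/-- `v` is erodable w.r.t. `S`: redundant and an outer boundary point of `S`. -/
def Erodable (S : Set (ℤ × ℤ)) (v : ℤ × ℤ) : Prop :=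
  Redundant S v ∧ IsOuterBoundaryPt S v

/-- A set of indices of neighbors that is an arc: a nonempty set of consecutive
positions in the cyclic order. -/
def IsArc (I : Set (Fin 6)) : Prop :=
  ∃ (a : Fin 6) (len : ℕ), 0 < len ∧ len ≤ 6 ∧
    I = {i | ∃ k : ℕ, k < len ∧ i = a + (Fin.ofNat 6 k)}

/-- The index set of the neighbors of `v` lying outside `S`. -/
def outIdx (S : Set (ℤ × ℤ)) (v : ℤ × ℤ) : Set (Fin 6) := {i | nbr v i ∉ S}

/-- A maximal arc of `v` w.r.t. `S`: a maximal arc of consecutive neighbors of `v`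
none of which lies in `S`. -/
def IsMaximalArc (S : Set (ℤ × ℤ)) (v : ℤ × ℤ) (I : Set (Fin 6)) : Prop :=
  IsArc I ∧ (∀ i ∈ I, nbr v i ∉ S) ∧
  ∀ J : Set (Fin 6), IsArc J → (∀ i ∈ J, nbr v i ∉ S) → I ⊆ J → I = J

/-- `v` is SCE (strictly convex and erodable) w.r.t. `S`: the neighbors of `v`
outside `S` form a single (maximal) arc of at least 3 points, and some neighbor of
`v` lies in an infinite connected component of the complement of `S`. -/
def SCE (S : Set (ℤ × ℤ)) (v : ℤ × ℤ) : Prop :=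
  IsArc (outIdx S v) ∧ 3 ≤ (outIdx S v).ncard ∧
  ∃ i : Fin 6, nbr v i ∉ S ∧ (compOf S (nbr v i)).Infinite

/-- The level set `L_i` of `l` in `S`. -/
noncomputable def levelSet (S : Set (ℤ × ℤ)) (l : ℤ × ℤ) (i : ℕ) : Set (ℤ × ℤ) :=
  {u ∈ S | distS S l u = i}

/-- The closed neighborhood `N_i` of `l` in `S`. -/
noncomputable def closedNbhd (S : Set (ℤ × ℤ)) (l : ℤ × ℤ) (i : ℕ) : Set (ℤ × ℤ) :=
  {u ∈ S | distS S l u ≤ i}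

/-- `v ∈ L_i` is `(i,k)`-SCE-related: some `u ∈ L_i` is SCE w.r.t. `N_i` and is at
distance at most `k` from `v` within the subgraph induced by `L_i`. -/
noncomputable def SCERelated (S : Set (ℤ × ℤ)) (l : ℤ × ℤ) (i k : ℕ) (v : ℤ × ℤ) : Prop :=
  ∃ u ∈ levelSet S l i, SCE (closedNbhd S l i) u ∧
    (gOn (levelSet S l i)).Reachable v u ∧ (gOn (levelSet S l i)).dist v u ≤ k


section Stmt16Aux

lemma dirs0 : dirs 0 = (1,0) := rfl
lemma dirs1 : dirs 1 = (0,1) := rfl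
lemma dirs2 : dirs 2 = (-1,1) := rfl
lemma dirs3 : dirs 3 = (-1,0) := rfl
lemma dirs4 : dirs 4 = (0,-1) := rfl
lemma dirs5 : dirs 5 = (1,-1) := rfl

/-- The arc starting at `a` of length `len`, as a finset. -/
def arcF (a : Fin 6) (len : ℕ) : Finset (Fin 6) :=
  Finset.univ.filter (fun i => ∃ k, k < len ∧ i = a + (Fin.ofNat 6 k))

lemma keyArc (len : ℕ) (h6 : len ≤ 6) : ∀ (a i : Fin 6),
    3 ≤ (arcF a len).card → i ∉ arcF a len → i+1 ∉ arcF a len → i+5 ∉ arcF a len →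
    (arcF a len).card = 3 ∧
      ∀ j : Fin 6, j ∉ arcF a len → j+1 ∉ arcF a len → j+5 ∉ arcF a len → j = i := by
  interval_cases len <;> decide

set_option linter.unreachableTactic false in
set_option linter.unusedTactic false in
lemma adj_nbr_succ (v : ℤ × ℤ) (i : Fin 6) : triGrid.Adj (nbr v i) (nbr v (i+1)) := by
  fin_cases i <;>
    simp [triGrid, nbr, dirs0,dirs1,dirs2,dirs3,dirs4,dirs5,
      Set.mem_insert_iff, Set.mem_singleton_iff, Prod.mk.injEq] <;>
    omega

lemma exists_nbr {v u : ℤ × ℤ} (h : triGrid.Adj v u) : ∃ i, u = nbr v i := by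
  simp only [triGrid, Set.mem_insert_iff, Set.mem_singleton_iff, Prod.mk.injEq] at h
  rcases h with h|h|h|h|h|h
  · exact ⟨3, by simp [nbr, dirs3, Prod.ext_iff]; omega⟩
  · exact ⟨0, by simp [nbr, dirs0, Prod.ext_iff]; omega⟩
  · exact ⟨4, by simp [nbr, dirs4, Prod.ext_iff]; omega⟩
  · exact ⟨1, by simp [nbr, dirs1, Prod.ext_iff]; omega⟩
  · exact ⟨2, by simp [nbr, dirs2, Prod.ext_iff]; omega⟩
  · exact ⟨5, by simp [nbr, dirs5, Prod.ext_iff]; omega⟩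

lemma add51 : ∀ i : Fin 6, i + 5 + 1 = i := by decide

end Stmt16Aux

/-- For a shape `S` with at least two points and `v ∈ S` SCE w.r.t.
`S`: at most one neighbor of `v` in `S` is an interior point of `S`; moreover, if
some neighbor of `v` in `S` is an interior point, then `v` has exactly three
neighbors outside `S` (boundary count 1). -/
theorem stmt16 (S : Set (ℤ × ℤ)) (hS : IsShape S) (h2 : 2 ≤ S.ncard)
    (v : ℤ × ℤ) (hv : v ∈ S) (hsce : SCE S v) :
    {u | triGrid.Adj v u ∧ IsInteriorPt S u}.ncard ≤ 1 ∧
    ((∃ u, triGrid.Adj v u ∧ IsInteriorPt S u) → (outIdx S v).ncard = 3) := by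
  obtain ⟨⟨a, len, h0, h6, hOeq⟩, h3, -⟩ := hsce
  have hF : (outIdx S v) = ↑(arcF a len) := by
    rw [hOeq]; ext i; simp [arcF]
  have hmemF : ∀ j : Fin 6, j ∈ arcF a len ↔ nbr v j ∉ S := by
    intro j
    rw [← Finset.mem_coe, ← hF]
    rfl
  have h3' : 3 ≤ (arcF a len).card := by rwa [hF, Set.ncard_coe_finset] at h3
  have main : ∀ u, triGrid.Adj v u → IsInteriorPt S u →
      ∃ i : Fin 6, u = nbr v i ∧ i ∉ arcF a len ∧ i+1 ∉ arcF a len ∧ i+5 ∉ arcF a len := by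
    intro u hadj hint
    obtain ⟨i, rfl⟩ := exists_nbr hadj
    refine ⟨i, rfl, ?_, ?_, ?_⟩
    · intro hm
      exact (hmemF i).1 hm hint.1
    · intro hm
      exact (hmemF _).1 hm (hint.2 _ (adj_nbr_succ v i))
    · intro hm
      refine (hmemF _).1 hm (hint.2 _ ?_)
      have := (adj_nbr_succ v (i+5)).symm
      rwa [add51 i] at this
  constructor
  · rcases Set.eq_empty_or_nonempty {u | triGrid.Adj v u ∧ IsInteriorPt S u} with he | ⟨u0, hu0⟩
    · simp [he]
    · obtain ⟨i0, hu0e, hi1, hi2, hi3⟩ := main u0 hu0.1 hu0.2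
      obtain ⟨-, huniq⟩ := keyArc len h6 a i0 h3' hi1 hi2 hi3
      have hsub : {u | triGrid.Adj v u ∧ IsInteriorPt S u} ⊆ {nbr v i0} := by
        rintro u ⟨hadj, hint⟩
        obtain ⟨j, rfl, hj1, hj2, hj3⟩ := main u hadj hint
        simp [huniq j hj1 hj2 hj3]
      calc {u | triGrid.Adj v u ∧ IsInteriorPt S u}.ncard
          ≤ ({nbr v i0} : Set (ℤ × ℤ)).ncard :=
            Set.ncard_le_ncard hsub (Set.finite_singleton _)
        _ = 1 := Set.ncard_singleton _
  · rintro ⟨u, hadj, hint⟩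
    obtain ⟨i, rfl, hi1, hi2, hi3⟩ := main u hadj hint
    rw [hF, Set.ncard_coe_finset]
    exact (keyArc len h6 a i h3' hi1 hi2 hi3).1
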